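/- arXiv:0712.2311 — 4 statements merged into one kernel-verified Lean document; each statement's English description precedes it below -/
import Mathlib

section
/- Every group homomorphism h : ℤ² → ℍˣ is conjugate to a complex representation: there exists μ ∈ ℍˣ such that μ⁻¹ h(γ) μ ∈ ℂˣ for all γ ∈ ℤ². -/
/-- The embedding of `ℂ = ℝ + ℝi` into the quaternions. -/
def toQ (z : ℂ) : Quaternion ℝ := ⟨z.re, z.im, 0, 0⟩

/-!
The image of `h` is a family of pairwise commuting quaternions. Unless all of them are real, one of
them, `a`, has nonzero imaginary part; anything commuting with `a` has imaginary part parallel to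
that of `a`, so the whole family lies in `ℝ + ℝa`. A quaternion `μ` conjugating `a` into
`ℝ + ℝi` then conjugates all of `ℝ + ℝa` into `ℝ + ℝi`.
-/

open Quaternion

@[simp] lemma re_toQ (z : ℂ) : (toQ z).re = z.re := rfl
@[simp] lemma imI_toQ (z : ℂ) : (toQ z).imI = z.im := rfl
@[simp] lemma imJ_toQ (z : ℂ) : (toQ z).imJ = 0 := rfl
@[simp] lemma imK_toQ (z : ℂ) : (toQ z).imK = 0 := rfl

lemma toQ_zero : toQ 0 = 0 := by
  ext <;> simp

lemma coe_add_smul_toQ (r s : ℝ) (w : ℂ) : (r : ℍ[ℝ]) + s • toQ w = toQ (r + s * w) := by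
  ext <;> simp

theorem Units.inv_mul_algebraMap_add_smul_mul {R A : Type*} [CommSemiring R] [Semiring A]
    [Algebra R A] (μ : Aˣ) (r s : R) (a : A) :
    (↑μ⁻¹ : A) * (algebraMap R A r + s • a) * μ = algebraMap R A r + s • (↑μ⁻¹ * a * μ) := by
  rw [mul_add, add_mul, ← Algebra.commutes, mul_assoc, Units.inv_mul, mul_one, mul_smul_comm,
    smul_mul_assoc]

namespace Quaternion

/-- If `im q` is not on the axis of `i`, then `μ = ‖im q‖ i + im q` bisects `i` and `im q`,
so conjugation by `μ` (a half-turn about `μ`) moves `q` into `ℝ + ℝi`. -/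
lemma exists_mul_eq_mul_toQ (q : ℍ[ℝ]) : ∃ μ : ℍ[ℝ], μ ≠ 0 ∧ ∃ z : ℂ, q * μ = μ * toQ z := by
  by_cases hc : q.imJ = 0 ∧ q.imK = 0
  · refine ⟨1, one_ne_zero, ⟨q.re, q.imI⟩, ?_⟩
    ext <;> simp [hc.1, hc.2]
  · set r : ℝ := √(q.imI ^ 2 + q.imJ ^ 2 + q.imK ^ 2)
    have hr2 : r ^ 2 = q.imI ^ 2 + q.imJ ^ 2 + q.imK ^ 2 := Real.sq_sqrt (by positivity)
    set μ : ℍ[ℝ] := ⟨0, r + q.imI, q.imJ, q.imK⟩ with hμ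
    refine ⟨μ, fun h0 => hc ⟨congrArg QuaternionAlgebra.imJ h0, congrArg QuaternionAlgebra.imK h0⟩,
      ⟨q.re, r⟩, ?_⟩
    ext <;> simp only [re_mul, imI_mul, imJ_mul, imK_mul] <;> simp [hμ] <;> linarith

lemma exists_conj_eq_toQ (q : ℍ[ℝ]) : ∃ (μ : ℍ[ℝ]ˣ) (z : ℂ), ↑μ⁻¹ * q * μ = toQ z := by
  obtain ⟨μ, hμ, z, hqz⟩ := exists_mul_eq_mul_toQ q
  refine ⟨Units.mk0 μ hμ, z, ?_⟩
  rw [Units.val_inv_eq_inv_val, Units.val_mk0, mul_assoc, hqz, ← mul_assoc, inv_mul_cancel₀ hμ,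
    one_mul]

lemma exists_eq_coe_add_smul_of_commute {a b : ℍ[ℝ]} (ha : a.im ≠ 0) (hab : Commute b a) :
    ∃ r s : ℝ, b = r + s • a := by
  have e1 := congrArg QuaternionAlgebra.imI hab.eq
  have e2 := congrArg QuaternionAlgebra.imJ hab.eq
  have e3 := congrArg QuaternionAlgebra.imK hab.eq
  simp only [imI_mul, imJ_mul, imK_mul] at e1 e2 e3
  -- `e1, e2, e3` say that `im a × im b = 0`, so `im b = s • im a` with `s = ⟪im a, im b⟫ / ‖im a‖²`.
  set d := a.imI ^ 2 + a.imJ ^ 2 + a.imK ^ 2 with hd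
  have hd0 : d ≠ 0 := by
    simpa [normSq_def', hd] using normSq_ne_zero.mpr ha
  set s : ℝ := (a.imI * b.imI + a.imJ * b.imJ + a.imK * b.imK) / d with hs
  refine ⟨b.re - s * a.re, s, ?_⟩
  ext <;> simp only [re_add, imI_add, imJ_add, imK_add, re_coe, imI_coe, imJ_coe, imK_coe,
    re_smul, imI_smul, imJ_smul, imK_smul, smul_eq_mul, hs] <;> field_simp
  · ring
  · linear_combination b.imI * hd + (a.imJ / 2) * e3 - (a.imK / 2) * e2
  · linear_combination b.imJ * hd - (a.imI / 2) * e3 + (a.imK / 2) * e1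
  · linear_combination b.imK * hd + (a.imI / 2) * e2 - (a.imJ / 2) * e1

lemma exists_forall_eq_coe_add_smul {ι : Type*} (f : ι → ℍ[ℝ])
    (hf : ∀ i j, Commute (f i) (f j)) : ∃ a : ℍ[ℝ], ∀ i, ∃ r s : ℝ, f i = r + s • a := by
  by_cases hreal : ∀ i, (f i).im = 0
  · exact ⟨0, fun i => ⟨(f i).re, 0, by simpa [hreal i] using (re_add_im (f i)).symm⟩⟩
  · obtain ⟨i₀, hi₀⟩ := not_forall.mp hreal
    exact ⟨f i₀, fun i => exists_eq_coe_add_smul_of_commute hi₀ (hf i i₀)⟩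

end Quaternion

/-- Every homomorphism `ℤ² → ℍˣ` is conjugate to a complex representation. -/
theorem hom_Z2_to_quaternions_conjugate_complex (h : ℤ × ℤ → (Quaternion ℝ)ˣ)
    (hhom : ∀ γ γ' : ℤ × ℤ, h (γ + γ') = h γ * h γ') :
    ∃ μ : (Quaternion ℝ)ˣ, ∀ γ : ℤ × ℤ, ∃ z : ℂ, z ≠ 0 ∧
      ((μ⁻¹ * h γ * μ : (Quaternion ℝ)ˣ) : Quaternion ℝ) = toQ z := by
  have hcomm (γ γ' : ℤ × ℤ) : Commute (h γ : ℍ[ℝ]) (h γ') :=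
    Commute.units_val (by rw [Commute, SemiconjBy, ← hhom, ← hhom, add_comm])
  obtain ⟨a, ha⟩ := exists_forall_eq_coe_add_smul (fun γ => (h γ : ℍ[ℝ])) hcomm
  obtain ⟨μ, w, hw⟩ := exists_conj_eq_toQ a
  refine ⟨μ, fun γ => ?_⟩
  obtain ⟨r, s, hrs⟩ := ha γ
  have hconj : ((μ⁻¹ * h γ * μ : ℍ[ℝ]ˣ) : ℍ[ℝ]) = toQ (r + s * w) := by
    rw [Units.val_mul, Units.val_mul, hrs, ← algebraMap_def,
      Units.inv_mul_algebraMap_add_smul_mul, hw, algebraMap_def, coe_add_smul_toQ]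
  refine ⟨r + s * w, fun hz => (μ⁻¹ * h γ * μ).ne_zero ?_, hconj⟩
  rw [hconj, hz, toQ_zero]
end

section
/- Let h, h' : Γ → ℂˣ be group homomorphisms from a group Γ into the nonzero complex numbers, viewed inside ℍˣ, such that h'(γ) = μ⁻¹ h(γ) μ for all γ ∈ Γ, for some fixed μ ∈ ℍˣ. If h is not real-valued (i.e., h(γ₀) ∉ ℝ for some γ₀), then h' = h or h' = h̄ (the pointwise complex conjugate of h). -/
/-!
Write `μ = α + β j` with `α, β ∈ ℂ`. Since `j z = z̄ j` for `z ∈ ℂ`, the relation `μ w = z μ` splits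
into `α w = z α` and `β w̄ = z β`. If `α ≠ 0` the first gives `w = z`; otherwise `β ≠ 0` and the
second gives `w = z̄`. The choice between the two is made once for `μ`, hence uniformly in `γ`.
-/

namespace Quaternion

/-- The coordinate `α` of `q = α + β j`. -/
def complexPart (q : ℍ[ℝ]) : ℂ := ⟨q.re, q.imI⟩

/-- The coordinate `β` of `q = α + β j`. -/
def jPart (q : ℍ[ℝ]) : ℂ := ⟨q.imJ, q.imK⟩

theorem jPart_ne_zero_of_complexPart_eq_zero {q : ℍ[ℝ]} (hq : q ≠ 0) (h : q.complexPart = 0) :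
    q.jPart ≠ 0 := by
  intro hj
  apply hq
  simp only [complexPart, jPart, Complex.ext_iff, Complex.zero_re, Complex.zero_im] at h hj
  ext <;> simp [h.1, h.2, hj.1, hj.2]

theorem mul_toQ_eq_toQ_mul_iff (q : ℍ[ℝ]) (z w : ℂ) :
    q * toQ w = toQ z * q ↔
      q.complexPart * w = z * q.complexPart ∧ q.jPart * starRingEnd ℂ w = z * q.jPart := by
  simp only [Quaternion.ext_iff, re_mul, imI_mul, imJ_mul, imK_mul]
  simp only [toQ, complexPart, jPart, Complex.ext_iff, Complex.mul_re, Complex.mul_im,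
    Complex.conj_re, Complex.conj_im]
  constructor
  · rintro ⟨e₁, e₂, e₃, e₄⟩
    refine ⟨⟨?_, ?_⟩, ?_, ?_⟩ <;> linarith
  · rintro ⟨⟨e₁, e₂⟩, e₃, e₄⟩
    refine ⟨?_, ?_, ?_, ?_⟩ <;> linarith

end Quaternion

open Quaternion in
theorem eq_or_eq_conj_of_mul_toQ_eq_toQ_mul {ι : Type*} (z w : ι → ℂ) {q : ℍ[ℝ]} (hq : q ≠ 0)
    (hqzw : ∀ i, q * toQ (w i) = toQ (z i) * q) :
    (∀ i, w i = z i) ∨ ∀ i, w i = starRingEnd ℂ (z i) := by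
  have hsplit := fun i => (mul_toQ_eq_toQ_mul_iff q (z i) (w i)).1 (hqzw i)
  by_cases hα : q.complexPart = 0
  · have hβ := jPart_ne_zero_of_complexPart_eq_zero hq hα
    refine .inr fun i => ?_
    have hconj : starRingEnd ℂ (w i) = z i :=
      mul_left_cancel₀ hβ ((hsplit i).2.trans (mul_comm _ _))
    rw [← hconj, Complex.conj_conj]
  · exact .inl fun i => mul_left_cancel₀ hα ((hsplit i).1.trans (mul_comm _ _))

theorem conjugate_complex_representations_general {Γ : Type*} [Group Γ]
    (h h' : Γ →* ℂˣ) (μ : Quaternion ℝ) (hμ : μ ≠ 0)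
    (hconj : ∀ γ : Γ, toQ (h' γ) = μ⁻¹ * toQ (h γ) * μ) :
    (∀ γ : Γ, (h' γ : ℂ) = (h γ : ℂ)) ∨
    (∀ γ : Γ, (h' γ : ℂ) = (starRingEnd ℂ) (h γ : ℂ)) := by
  refine eq_or_eq_conj_of_mul_toQ_eq_toQ_mul (fun γ => (h γ : ℂ)) (fun γ => (h' γ : ℂ)) hμ
    fun γ => ?_
  rw [hconj γ, ← mul_assoc, ← mul_assoc, mul_inv_cancel₀ hμ, one_mul]

/-- If two complex representations of a group `Γ` are conjugate in `ℍˣ` and one of them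
is not real valued, then they agree or are complex conjugates of each other. -/
theorem conjugate_complex_representations {Γ : Type*} [Group Γ]
    (h h' : Γ →* ℂˣ) (μ : Quaternion ℝ) (hμ : μ ≠ 0)
    (hconj : ∀ γ : Γ, toQ (h' γ) = μ⁻¹ * toQ (h γ) * μ)
    (hnr : ∃ γ₀ : Γ, ((h γ₀ : ℂ)).im ≠ 0) :
    (∀ γ : Γ, (h' γ : ℂ) = (h γ : ℂ)) ∨
    (∀ γ : Γ, (h' γ : ℂ) = (starRingEnd ℂ) (h γ : ℂ)) :=
  conjugate_complex_representations_general h h' μ hμ hconj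
end

section
/- Let S : ℍ² → ℍ² be a right ℍ-linear map with S² = -Id. Then a quaternionic line L = v·ℍ (v ≠ 0) satisfies S(L) = L if and only if there exists a nonzero w ∈ L with S(w) = w·i. In particular every S-invariant quaternionic line is spanned by an 'eigenvector' of S with eigenvalue i. -/
/-!
If `S` maps the line `v·ℍ` into itself then `S v = v q` for some `q`, and `S² = -1` forces
`q² = -1`. Every square root of `-1` in `ℍ` is conjugate to `i`, say `q u = u i` with `u ≠ 0`,
and then `w = v u` satisfies `S w = w i`. Conversely, if `S w = w i` then `S (w p) = w (i p)`, and
`p ↦ i p` is a bijection of `ℍ`.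
-/

/-- The quaternion unit `i`. -/
def iq : Quaternion ℝ := ⟨0, 1, 0, 0⟩

section RightLine

variable {D : Type*} [DivisionRing D]

def rmul (v : D × D) (q : D) : D × D := (v.1 * q, v.2 * q)

def line (v : D × D) : Set (D × D) := {w | ∃ q, w = rmul v q}

lemma rmul_one (v : D × D) : rmul v 1 = v :=
  Prod.ext (mul_one _) (mul_one _)

lemma rmul_rmul (v : D × D) (p q : D) : rmul (rmul v p) q = rmul v (p * q) :=
  Prod.ext (mul_assoc _ _ _) (mul_assoc _ _ _)

lemma rmul_neg_one (v : D × D) : rmul v (-1) = -v :=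
  Prod.ext (mul_neg_one _) (mul_neg_one _)

lemma rmul_eq_zero {v : D × D} {q : D} : rmul v q = 0 ↔ v = 0 ∨ q = 0 := by
  simp only [rmul, mul_eq_zero, Prod.ext_iff, Prod.fst_zero, Prod.snd_zero]
  tauto

lemma rmul_left_cancel {v : D × D} (hv : v ≠ 0) {p q : D} (h : rmul v p = rmul v q) : p = q := by
  have : rmul v (p - q) = 0 := by
    simpa [rmul, mul_sub, sub_eq_zero] using h
  exact sub_eq_zero.mp ((rmul_eq_zero.mp this).resolve_left hv)

lemma self_mem_line (v : D × D) : v ∈ line v := ⟨1, (rmul_one v).symm⟩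

lemma line_eq_of_mem {v w : D × D} (hw : w ∈ line v) (hw0 : w ≠ 0) : line w = line v := by
  obtain ⟨q, rfl⟩ := hw
  have hq : q ≠ 0 := fun hq => hw0 (rmul_eq_zero.mpr (Or.inr hq))
  ext x
  constructor
  · rintro ⟨p, rfl⟩
    exact ⟨q * p, rmul_rmul v q p⟩
  · rintro ⟨p, rfl⟩
    exact ⟨q⁻¹ * p, by rw [rmul_rmul, mul_inv_cancel_left₀ hq]⟩

variable {S : D × D → D × D} (hsmul : ∀ v q, S (rmul v q) = rmul (S v) q)
include hsmul

lemma image_line_of_apply_eq_rmul {w : D × D} {c : D} (hc : c ≠ 0) (hw : S w = rmul w c) :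
    S '' line w = line w := by
  have hS : ∀ p, S (rmul w p) = rmul w (c * p) := fun p => by rw [hsmul, hw, rmul_rmul]
  ext x
  constructor
  · rintro ⟨_, ⟨p, rfl⟩, rfl⟩
    exact ⟨c * p, hS p⟩
  · rintro ⟨p, rfl⟩
    exact ⟨rmul w (c⁻¹ * p), ⟨_, rfl⟩, by rw [hS, mul_inv_cancel_left₀ hc]⟩

lemma mul_self_eq_neg_one_of_apply_eq_rmul (hS2 : ∀ v, S (S v) = -v) {v : D × D} (hv : v ≠ 0)
    {q : D} (hq : S v = rmul v q) : q * q = -1 := by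
  apply rmul_left_cancel hv
  rw [← rmul_rmul, ← hq, ← hsmul, ← hq, hS2, rmul_neg_one]

end RightLine

section Quaternion

open Quaternion

def jq : ℍ[ℝ] := ⟨0, 0, 1, 0⟩

lemma iq_mul_iq : iq * iq = -1 := by
  ext <;> simp [re_mul, imI_mul, imJ_mul, imK_mul] <;> simp [iq]

lemma neg_iq_mul_jq : -iq * jq = jq * iq := by
  ext <;> simp [re_mul, imI_mul, imJ_mul, imK_mul] <;> simp [iq, jq]

lemma iq_ne_zero : iq ≠ 0 := fun h => one_ne_zero (congrArg QuaternionAlgebra.imI h)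

lemma jq_ne_zero : jq ≠ 0 := fun h => one_ne_zero (congrArg QuaternionAlgebra.imJ h)

-- `q (q + i) = (q + i) i` as soon as `q² = i²`; the case `q + i = 0` is covered by `j`.
lemma exists_ne_zero_mul_eq_mul_iq {q : ℍ[ℝ]} (hq : q * q = -1) : ∃ u ≠ 0, q * u = u * iq := by
  by_cases hqi : q = -iq
  · exact ⟨jq, jq_ne_zero, hqi ▸ neg_iq_mul_jq⟩
  · refine ⟨q + iq, fun h => hqi (eq_neg_of_add_eq_zero_left h), ?_⟩
    rw [mul_add, add_mul, hq, iq_mul_iq, add_comm]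

lemma exists_eigenvector_of_apply_mem_line {S : ℍ[ℝ] × ℍ[ℝ] → ℍ[ℝ] × ℍ[ℝ]}
    (hsmul : ∀ v q, S (rmul v q) = rmul (S v) q) (hS2 : ∀ v, S (S v) = -v)
    {v : ℍ[ℝ] × ℍ[ℝ]} (hv : v ≠ 0) (hSv : S v ∈ line v) :
    ∃ w ∈ line v, w ≠ 0 ∧ S w = rmul w iq := by
  obtain ⟨q, hq⟩ := hSv
  obtain ⟨u, hu0, hu⟩ :=
    exists_ne_zero_mul_eq_mul_iq (mul_self_eq_neg_one_of_apply_eq_rmul hsmul hS2 hv hq)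
  refine ⟨rmul v u, ⟨u, rfl⟩, fun h => (rmul_eq_zero.mp h).elim hv hu0, ?_⟩
  rw [hsmul, hq, rmul_rmul, rmul_rmul, hu]

end Quaternion

theorem invariant_line_iff_eigenvector_general
    (S : Quaternion ℝ × Quaternion ℝ → Quaternion ℝ × Quaternion ℝ)
    (hsmul : ∀ (v : Quaternion ℝ × Quaternion ℝ) (q : Quaternion ℝ),
      S (v.1 * q, v.2 * q) = ((S v).1 * q, (S v).2 * q))
    (hS2 : ∀ v, S (S v) = -v)
    (v : Quaternion ℝ × Quaternion ℝ) (hv : v ≠ 0) :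
    S '' {w | ∃ q : Quaternion ℝ, w = (v.1 * q, v.2 * q)}
        = {w | ∃ q : Quaternion ℝ, w = (v.1 * q, v.2 * q)} ↔
      ∃ w ∈ {w : Quaternion ℝ × Quaternion ℝ | ∃ q : Quaternion ℝ, w = (v.1 * q, v.2 * q)},
        w ≠ 0 ∧ S w = (w.1 * iq, w.2 * iq) := by
  change S '' line v = line v ↔ ∃ w ∈ line v, w ≠ 0 ∧ S w = rmul w iq
  constructor
  · intro hL
    exact exists_eigenvector_of_apply_mem_line hsmul hS2 hv (hL ▸ ⟨v, self_mem_line v, rfl⟩)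
  · rintro ⟨w, hwL, hw0, hSw⟩
    rw [← line_eq_of_mem hwL hw0]
    exact image_line_of_apply_eq_rmul hsmul iq_ne_zero hSw

/-- For a right `ℍ`-linear `S : ℍ² → ℍ²` with `S² = -1`, a quaternionic line `v·ℍ` is
`S`-invariant iff it is spanned by an eigenvector of `S` with eigenvalue `i`. -/
theorem invariant_line_iff_eigenvector
    (S : Quaternion ℝ × Quaternion ℝ → Quaternion ℝ × Quaternion ℝ)
    (hadd : ∀ v w, S (v + w) = S v + S w)
    (hsmul : ∀ (v : Quaternion ℝ × Quaternion ℝ) (q : Quaternion ℝ),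
      S (v.1 * q, v.2 * q) = ((S v).1 * q, (S v).2 * q))
    (hS2 : ∀ v, S (S v) = -v)
    (v : Quaternion ℝ × Quaternion ℝ) (hv : v ≠ 0) :
    S '' {w | ∃ q : Quaternion ℝ, w = (v.1 * q, v.2 * q)}
        = {w | ∃ q : Quaternion ℝ, w = (v.1 * q, v.2 * q)} ↔
      ∃ w ∈ {w : Quaternion ℝ × Quaternion ℝ | ∃ q : Quaternion ℝ, w = (v.1 * q, v.2 * q)},
        w ≠ 0 ∧ S w = (w.1 * iq, w.2 * iq) :=
  invariant_line_iff_eigenvector_general S hsmul hS2 v hv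
end

section
/- Let P ⊂ Im ℍ be a 2-dimensional real subspace of the imaginary quaternions, and let μ be a unit quaternion. If the right translate P·μ = {p·μ : p ∈ P} is again contained in Im ℍ, then P·μ = P. -/
/-!
The hypotheses put `P` inside the kernel of `q ↦ (Re q, Re (q μ))`. If `μ` is real, right multiplication by `μ` is a scalar and preserves `P`.
Otherwise that kernel is `2`-dimensional, hence equal to `P`, and it is stable under right
multiplication by `μ` because `μ² = 2 Re μ · μ - |μ|²`. Finally, right multiplication by `μ ≠ 0` is
injective, so it maps the finite-dimensional `P` into, hence onto, itself.
-/

open Module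

theorem Submodule.map_eq_self_of_injective {K V : Type*} [DivisionRing K] [AddCommGroup V]
    [Module K V] {P : Submodule K V} [FiniteDimensional K P] {f : V →ₗ[K] V}
    (hf : Function.Injective f) (hle : P.map f ≤ P) : P.map f = P :=
  Submodule.eq_of_le_of_finrank_eq hle (LinearEquiv.finrank_eq (P.equivMapOfInjective f hf)).symm

namespace Quaternion

variable (μ : ℍ[ℝ])

noncomputable def reProdReMulRight : ℍ[ℝ] →ₗ[ℝ] ℝ × ℝ :=
  (QuaternionAlgebra.reₗ _ _ _).prod (QuaternionAlgebra.reₗ _ _ _ ∘ₗ LinearMap.mulRight ℝ μ)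

variable {μ}

@[simp]
theorem reProdReMulRight_apply (q : ℍ[ℝ]) : reProdReMulRight μ q = (q.re, (q * μ).re) := rfl

theorem mem_ker_reProdReMulRight {q : ℍ[ℝ]} :
    q ∈ LinearMap.ker (reProdReMulRight μ) ↔ q.re = 0 ∧ (q * μ).re = 0 :=
  Prod.mk_eq_zero

/-- `μ` is a root of `X² - 2 Re μ X + |μ|²`. -/
theorem re_mul_mul_self (q : ℍ[ℝ]) :
    (q * μ * μ).re = 2 * μ.re * (q * μ).re - normSq μ * q.re := by
  simp only [re_mul, imI_mul, imJ_mul, imK_mul, normSq_def']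
  ring

theorem mul_mem_ker_reProdReMulRight {q : ℍ[ℝ]} (hq : q ∈ LinearMap.ker (reProdReMulRight μ)) :
    q * μ ∈ LinearMap.ker (reProdReMulRight μ) := by
  rw [mem_ker_reProdReMulRight] at hq ⊢
  exact ⟨hq.2, by rw [re_mul_mul_self, hq.1, hq.2]; ring⟩

theorem surjective_reProdReMulRight (hμ : μ.im ≠ 0) :
    Function.Surjective (reProdReMulRight μ) := by
  have hn : normSq μ.im ≠ 0 := normSq_eq_zero.not.mpr hμ
  rintro ⟨x, y⟩
  refine ⟨x - ((y - x * μ.re) / normSq μ.im) • μ.im, ?_⟩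
  have hre : (μ.im * μ).re = -normSq μ.im := by
    simp only [re_mul, imI_im, imJ_im, imK_im, re_im, normSq_def']
    ring
  simp only [reProdReMulRight_apply, sub_mul, smul_mul_assoc, coe_mul_eq_smul, re_sub, re_smul,
    re_coe, re_im, hre, smul_eq_mul, mul_zero, sub_zero, Prod.mk.injEq, true_and]
  field_simp
  ring

theorem finrank_ker_reProdReMulRight (hμ : μ.im ≠ 0) :
    finrank ℝ (LinearMap.ker (reProdReMulRight μ)) = 2 := by
  have := (reProdReMulRight μ).finrank_range_add_finrank_ker
  rw [LinearMap.range_eq_top.mpr (surjective_reProdReMulRight hμ), finrank_top,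
    finrank_eq_four, finrank_prod, finrank_self] at this
  omega

theorem mul_mem_of_finrank_eq_two {P : Submodule ℝ ℍ[ℝ]} (hdim : finrank ℝ P = 2)
    (hP : ∀ p ∈ P, p.re = 0) (h : ∀ p ∈ P, (p * μ).re = 0) {p : ℍ[ℝ]} (hp : p ∈ P) :
    p * μ ∈ P := by
  by_cases hμ : μ.im = 0
  · rw [← re_add_im μ, hμ, add_zero, mul_coe_eq_smul]
    exact P.smul_mem _ hp
  · have hker : P = LinearMap.ker (reProdReMulRight μ) :=
      Submodule.eq_of_le_of_finrank_eq
        (fun q hq => mem_ker_reProdReMulRight.mpr ⟨hP q hq, h q hq⟩)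
        (by rw [hdim, finrank_ker_reProdReMulRight hμ])
    rw [hker] at hp ⊢
    exact mul_mem_ker_reProdReMulRight hp

end Quaternion

/-- If a 2-plane `P ⊂ Im ℍ` is right translated by a unit quaternion `μ` into `Im ℍ`,
then `P·μ = P`. -/
theorem plane_translate_in_imaginary (P : Submodule ℝ (Quaternion ℝ))
    (hdim : Module.finrank ℝ P = 2)
    (hP : ∀ p ∈ P, p.re = 0)
    (μ : Quaternion ℝ) (hμ : Quaternion.normSq μ = 1)
    (h : ∀ p ∈ P, (p * μ).re = 0) :
    (fun p => p * μ) '' (P : Set (Quaternion ℝ)) = (P : Set (Quaternion ℝ)) := by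
  have hμ0 : μ ≠ 0 := by
    rintro rfl
    simp at hμ
  have hmap : P.map (LinearMap.mulRight ℝ μ) = P :=
    Submodule.map_eq_self_of_injective (mul_left_injective₀ hμ0) <| by
      rintro _ ⟨p, hp, rfl⟩
      exact Quaternion.mul_mem_of_finrank_eq_two hdim hP h hp
  exact (Submodule.map_coe _ P).symm.trans (congrArg SetLike.coe hmap)
end
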